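/- Let 1 < p < +∞. For every analytic function f on the unit disc 𝔻 with ρ_{p,∞}(f) < ∞ there exists a sequence {f_n} of analytic functions, each belonging to RM(p,0), such that ρ_{p,p}(f_n - f) → 0 as n → ∞ and limsup_n ρ_{p,∞}(f_n) ≤ ρ_{p,∞}(f). -/

import Mathlib

open MeasureTheory Metric Set Filter
open scoped ENNReal

/-- The point `r e^{iθ}` of the complex plane. -/
noncomputable def circ (r θ : ℝ) : ℂ := r * Complex.exp (θ * Complex.I)

/-- `ρ_{p,∞}(h) = sup_θ (∫₀¹ |h(re^{iθ})|^p dr)^{1/p}` (with values in `ℝ≥0∞`). -/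
noncomputable def rhoInf (p : ℝ) (h : ℂ → ℂ) : ℝ≥0∞ :=
  ⨆ θ : ℝ, (∫⁻ r in Ioc (0:ℝ) 1, ENNReal.ofReal (‖h (circ r θ)‖ ^ p)) ^ (1/p)

/-- The Bergman-type norm
`ρ_{p,p}(h) = ((1/2π) ∫₀^{2π} ∫₀¹ |h(re^{iθ})|^p dr dθ)^{1/p}`. -/
noncomputable def rhoPP (p : ℝ) (h : ℂ → ℂ) : ℝ≥0∞ :=
  (ENNReal.ofReal (1/(2*Real.pi)) *
    ∫⁻ θ in Ioc (0:ℝ) (2*Real.pi),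
      ∫⁻ r in Ioc (0:ℝ) 1, ENNReal.ofReal (‖h (circ r θ)‖ ^ p)) ^ (1/p)

/-- `f` belongs to `RM(p,0)`: `f` is analytic on the unit disc and
`lim_{ρ→1⁻} sup_θ (∫_ρ¹ |f(re^{iθ})|^p dr)^{1/p} = 0`. -/
def memRMp0 (p : ℝ) (f : ℂ → ℂ) : Prop :=
  DifferentiableOn ℂ f (ball (0:ℂ) 1) ∧
    Tendsto (fun ρ : ℝ => ⨆ θ : ℝ,
        (∫⁻ r in Ioc ρ 1, ENNReal.ofReal (‖f (circ r θ)‖ ^ p)) ^ (1/p))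
      (nhdsWithin 1 (Iio (1:ℝ))) (nhds 0)

/-!
The approximants are the dilations `f_n(z) = f(a_n z)` with `a_n ↑ 1`. Each is bounded on the
closed disc, hence in `RM(p,0)`, and the substitution `r ↦ a r` on each ray gives
`ρ_{p,∞}(f_a) ≤ a^{-1/p} ρ_{p,∞}(f)`. For `ρ_{p,p}(f_a - f) → 0`, split each ray at some `ρ < 1`:
on `[0, ρ]` the dilations converge boundedly to `f`, while on `[ρ, 1]` both `f_a` and `f` are
controlled by the tail `∫_{aρ}^1 |f|^p`, which is small because the radial integral is finite.
The radial integrals of `|f_a - f|^p` are bounded by `3·2^p ρ_{p,∞}(f)^p`, so dominated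
convergence in `θ` concludes.
-/

open Topology

lemma ofReal_norm_sub_rpow_le {E : Type*} [SeminormedAddCommGroup E] {p : ℝ} (hp : 0 ≤ p)
    (x y : E) :
    ENNReal.ofReal (‖x - y‖ ^ p) ≤
      2 ^ p * (ENNReal.ofReal (‖x‖ ^ p) + ENNReal.ofReal (‖y‖ ^ p)) := by
  have hmax : ‖x - y‖ ≤ 2 * max ‖x‖ ‖y‖ := by
    linarith [norm_sub_le x y, le_max_left ‖x‖ ‖y‖, le_max_right ‖x‖ ‖y‖]
  calc ENNReal.ofReal (‖x - y‖ ^ p)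
      ≤ ENNReal.ofReal ((2 * max ‖x‖ ‖y‖) ^ p) := by gcongr
    _ = 2 ^ p * ENNReal.ofReal (max ‖x‖ ‖y‖ ^ p) := by
      rw [Real.mul_rpow zero_le_two (by positivity), ENNReal.ofReal_mul (by positivity),
        ← ENNReal.ofReal_rpow_of_nonneg zero_le_two hp, ENNReal.ofReal_ofNat]
    _ ≤ 2 ^ p * (ENNReal.ofReal (‖x‖ ^ p) + ENNReal.ofReal (‖y‖ ^ p)) := by
      gcongr
      rcases le_total ‖x‖ ‖y‖ with h | h
      · rw [max_eq_right h]; exact le_add_self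
      · rw [max_eq_left h]; exact le_self_add

lemma setLIntegral_Ioc_comp_mul_left {a : ℝ} (ha : 0 < a) (g : ℝ → ℝ≥0∞) (c d : ℝ) :
    ∫⁻ r in Ioc c d, g (a * r) =
      ENNReal.ofReal a⁻¹ * ∫⁻ s in Ioc (a * c) (a * d), g s := by
  have hmp : MeasurePreserving (a * ·) (ENNReal.ofReal |a| • volume) volume :=
    ⟨measurable_const_mul a, by rw [Measure.map_smul, Real.smul_map_volume_mul_left ha.ne']⟩
  have := hmp.setLIntegral_comp_preimage_emb (measurableEmbedding_mulLeft₀ ha.ne') g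
    (Ioc (a * c) (a * d))
  rw [preimage_const_mul_Ioc₀ _ _ ha, mul_div_cancel_left₀ _ ha.ne',
    mul_div_cancel_left₀ _ ha.ne', Measure.restrict_smul, lintegral_smul_measure,
    abs_of_pos ha] at this
  rw [← this, smul_eq_mul, ← mul_assoc, ← ENNReal.ofReal_mul (inv_nonneg.2 ha.le),
    inv_mul_cancel₀ ha.ne', ENNReal.ofReal_one, one_mul]

lemma ContinuousOn.aemeasurable_ofReal_norm_rpow {α E : Type*} [TopologicalSpace α]
    [MeasurableSpace α] [OpensMeasurableSpace α] [SeminormedAddCommGroup E] {u : α → E}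
    {s : Set α} (hu : ContinuousOn u s) (hs : MeasurableSet s) {p : ℝ} (hp : 0 ≤ p)
    {μ : Measure α} : AEMeasurable (fun x => ENNReal.ofReal (‖u x‖ ^ p)) (μ.restrict s) :=
  (ENNReal.continuous_ofReal.comp_continuousOn
    (hu.norm.rpow_const fun _ _ => Or.inr hp)).aemeasurable hs

lemma tendsto_setLIntegral_Ioc_zero {u : ℝ → ℝ≥0∞} {a b : ℝ} (hab : a < b)
    (hu : ∫⁻ r in Ioc a b, u r ≠ ⊤) :
    Tendsto (fun ρ => ∫⁻ r in Ioc ρ b, u r) (𝓝 b) (𝓝 0) := by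
  have hvol : Tendsto (fun ρ => volume.restrict (Ioc a b) (Ioc ρ b)) (𝓝 b) (𝓝 0) := by
    have hlen : Tendsto (fun ρ => ENNReal.ofReal (b - ρ)) (𝓝 b) (𝓝 0) := by
      have hcont : Continuous fun ρ : ℝ => ENNReal.ofReal (b - ρ) :=
        ENNReal.continuous_ofReal.comp (by fun_prop)
      simpa using hcont.tendsto b
    refine tendsto_of_tendsto_of_tendsto_of_le_of_le tendsto_const_nhds hlen
      (fun _ => zero_le) fun ρ => ?_
    rw [Measure.restrict_apply measurableSet_Ioc, ← Real.volume_Ioc]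
    exact measure_mono inter_subset_left
  refine (tendsto_setLIntegral_zero hu hvol).congr' ?_
  filter_upwards [eventually_gt_nhds hab] with ρ hρ
  rw [Measure.restrict_restrict measurableSet_Ioc,
    inter_eq_left.2 (Ioc_subset_Ioc_left hρ.le)]

section Dilation

variable {E : Type*} [SeminormedAddCommGroup E] {g : ℝ → E} {p : ℝ}

lemma setLIntegral_Ioc_comp_mul_sub_le (hg : ContinuousOn g (Ico 0 1)) (hp : 0 ≤ p) {a ρ : ℝ}
    (ha : 1 / 2 ≤ a) (ha1 : a < 1) (hρ : 0 ≤ ρ) :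
    ∫⁻ r in Ioc ρ 1, ENNReal.ofReal (‖g (a * r) - g r‖ ^ p) ≤
      3 * 2 ^ p * ∫⁻ r in Ioc (a * ρ) 1, ENNReal.ofReal (‖g r‖ ^ p) := by
  have ha0 : 0 < a := by linarith
  set T := ∫⁻ r in Ioc (a * ρ) 1, ENNReal.ofReal (‖g r‖ ^ p)
  have hdilated : ∫⁻ r in Ioc ρ 1, ENNReal.ofReal (‖g (a * r)‖ ^ p) ≤ 2 * T := by
    rw [setLIntegral_Ioc_comp_mul_left ha0 (fun s => ENNReal.ofReal (‖g s‖ ^ p)), mul_one]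
    gcongr
    · rw [← ENNReal.ofReal_ofNat]
      exact ENNReal.ofReal_le_ofReal (by rw [inv_le_comm₀ ha0 two_pos]; linarith)
    · exact lintegral_mono_set (Ioc_subset_Ioc_right ha1.le)
  have hself : ∫⁻ r in Ioc ρ 1, ENNReal.ofReal (‖g r‖ ^ p) ≤ T :=
    lintegral_mono_set (Ioc_subset_Ioc_left (mul_le_of_le_one_left hρ ha1.le))
  have hmeas : AEMeasurable (fun r => ENNReal.ofReal (‖g (a * r)‖ ^ p))
      (volume.restrict (Ioc ρ 1)) := by
    refine ContinuousOn.aemeasurable_ofReal_norm_rpow (hg.comp (by fun_prop) ?_)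
      measurableSet_Ioc hp
    intro r hr
    exact ⟨by nlinarith [hr.1], by nlinarith [hr.2]⟩
  calc ∫⁻ r in Ioc ρ 1, ENNReal.ofReal (‖g (a * r) - g r‖ ^ p)
      ≤ ∫⁻ r in Ioc ρ 1, 2 ^ p * (ENNReal.ofReal (‖g (a * r)‖ ^ p)
          + ENNReal.ofReal (‖g r‖ ^ p)) :=
        lintegral_mono fun r => ofReal_norm_sub_rpow_le hp _ _
    _ = 2 ^ p * ((∫⁻ r in Ioc ρ 1, ENNReal.ofReal (‖g (a * r)‖ ^ p))
          + ∫⁻ r in Ioc ρ 1, ENNReal.ofReal (‖g r‖ ^ p)) := by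
        rw [lintegral_const_mul' _ _ (by finiteness), lintegral_add_left' hmeas]
    _ ≤ 2 ^ p * (2 * T + T) := by gcongr
    _ = 3 * 2 ^ p * T := by ring

lemma tendsto_setLIntegral_Ioc_comp_mul_sub_of_lt_one (hg : ContinuousOn g (Ico 0 1)) (hp : 0 < p)
    {ρ : ℝ} (hρ : ρ < 1) :
    Tendsto (fun a => ∫⁻ r in Ioc 0 ρ, ENNReal.ofReal (‖g (a * r) - g r‖ ^ p))
      (𝓝[<] 1) (𝓝 0) := by
  obtain ⟨C, hC⟩ := (isCompact_Icc (a := (0 : ℝ)) (b := ρ)).exists_bound_of_continuousOn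
    (hg.mono (Icc_subset_Ico_right hρ))
  have ha : ∀ᶠ a in 𝓝[<] (1 : ℝ), a ∈ Icc 0 1 :=
    mem_of_superset (Ioo_mem_nhdsLT zero_lt_one) Ioo_subset_Icc_self
  have hmaps : ∀ a ∈ Icc (0 : ℝ) 1, MapsTo (a * ·) (Icc 0 ρ) (Icc 0 ρ) := fun a ha r hr =>
    ⟨mul_nonneg ha.1 hr.1, (mul_le_of_le_one_left hr.1 ha.2).trans hr.2⟩
  have hφ : Continuous fun x : E => ENNReal.ofReal (‖x‖ ^ p) :=
    ENNReal.continuous_ofReal.comp (continuous_norm.rpow_const fun _ => Or.inr hp.le)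
  rw [show (0 : ℝ≥0∞) = ∫⁻ _ in Ioc 0 ρ, 0 from lintegral_zero.symm]
  refine tendsto_lintegral_filter_of_dominated_convergence'
    (fun _ => ENNReal.ofReal ((2 * C) ^ p)) ?_ ?_ (by simp [Real.volume_Ioc, ENNReal.mul_eq_top]) ?_
  · filter_upwards [ha] with a ha
    exact ContinuousOn.aemeasurable_ofReal_norm_rpow
      (((hg.mono (Icc_subset_Ico_right hρ)).comp (by fun_prop) (hmaps a ha)).sub
        (hg.mono (Icc_subset_Ico_right hρ)) |>.mono Ioc_subset_Icc_self) measurableSet_Ioc hp.le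
  · filter_upwards [ha] with a ha
    refine ae_restrict_of_forall_mem measurableSet_Ioc fun r hr => ?_
    have hr' := Ioc_subset_Icc_self hr
    gcongr
    linarith [norm_sub_le (g (a * r)) (g r), hC _ (hmaps a ha hr'), hC r hr']
  · refine ae_restrict_of_forall_mem measurableSet_Ioc fun r hr => ?_
    have hr' : r ∈ Ico (0 : ℝ) 1 := ⟨hr.1.le, hr.2.trans_lt hρ⟩
    have hmul : Tendsto (fun a => a * r) (𝓝[<] 1) (𝓝[Ico 0 1] r) := by
      refine tendsto_nhdsWithin_iff.2 ⟨?_, ?_⟩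
      · exact ((continuous_id.mul continuous_const).tendsto' 1 r (one_mul r)).mono_left
          nhdsWithin_le_nhds
      · filter_upwards [ha] with a ha
        exact ⟨mul_nonneg ha.1 hr'.1, (mul_le_of_le_one_left hr'.1 ha.2).trans_lt hr'.2⟩
    have hsub := ((hg r hr').tendsto.comp hmul).sub_const (g r)
    rw [sub_self] at hsub
    simpa [Function.comp_def, Real.zero_rpow hp.ne'] using (hφ.tendsto 0).comp hsub

theorem tendsto_setLIntegral_Ioc_comp_mul_sub (hg : ContinuousOn g (Ico 0 1))
    (hfin : ∫⁻ r in Ioc 0 1, ENNReal.ofReal (‖g r‖ ^ p) ≠ ⊤) (hp : 0 < p) :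
    Tendsto (fun a => ∫⁻ r in Ioc 0 1, ENNReal.ofReal (‖g (a * r) - g r‖ ^ p))
      (𝓝[<] 1) (𝓝 0) := by
  set T := fun ρ => ∫⁻ r in Ioc ρ 1, ENNReal.ofReal (‖g r‖ ^ p)
  rw [ENNReal.tendsto_nhds_zero]
  intro ε hε
  have hT : Tendsto (fun ρ => 3 * 2 ^ p * T ρ) (𝓝[<] 1) (𝓝 0) := by
    simpa using ENNReal.Tendsto.const_mul
      ((tendsto_setLIntegral_Ioc_zero zero_lt_one hfin).mono_left nhdsWithin_le_nhds)
      (Or.inr (by finiteness))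
  obtain ⟨ρ₁, hρ₁T, hρ₁⟩ :=
    ((hT.eventually (gt_mem_nhds (ENNReal.half_pos hε.ne'))).and
      (Ioo_mem_nhdsLT zero_lt_one)).exists
  -- the margin `ρ₁ < ρ` keeps `a * ρ` above `ρ₁` for `a` close to `1`
  obtain ⟨ρ, hρ₁ρ, hρ1⟩ := exists_between hρ₁.2
  have hscaled : Tendsto (fun a => a * ρ) (𝓝[<] 1) (𝓝 ρ) :=
    ((continuous_id.mul continuous_const).tendsto' 1 ρ (one_mul ρ)).mono_left nhdsWithin_le_nhds
  filter_upwards [(tendsto_setLIntegral_Ioc_comp_mul_sub_of_lt_one hg hp hρ1).eventually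
      (ge_mem_nhds (ENNReal.half_pos hε.ne')), Ioo_mem_nhdsLT (by norm_num : (1 : ℝ) / 2 < 1),
      hscaled.eventually (eventually_gt_nhds hρ₁ρ)] with a hmain ha haρ
  calc ∫⁻ r in Ioc 0 1, ENNReal.ofReal (‖g (a * r) - g r‖ ^ p)
      = (∫⁻ r in Ioc 0 ρ, ENNReal.ofReal (‖g (a * r) - g r‖ ^ p))
        + ∫⁻ r in Ioc ρ 1, ENNReal.ofReal (‖g (a * r) - g r‖ ^ p) := by
        rw [← lintegral_union measurableSet_Ioc (Ioc_disjoint_Ioc_of_le le_rfl),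
          Ioc_union_Ioc_eq_Ioc (by linarith [hρ₁.1]) hρ1.le]
    _ ≤ ε / 2 + 3 * 2 ^ p * T (a * ρ) :=
        add_le_add hmain (setLIntegral_Ioc_comp_mul_sub_le hg hp.le ha.1.le ha.2
          (by linarith [hρ₁.1]))
    _ ≤ ε / 2 + 3 * 2 ^ p * T ρ₁ := by
        gcongr
        exact lintegral_mono_set (Ioc_subset_Ioc_left haρ.le)
    _ ≤ ε / 2 + ε / 2 := by gcongr
    _ = ε := ENNReal.add_halves ε

end Dilation

section Polar

variable {p : ℝ}

lemma norm_circ (r θ : ℝ) : ‖circ r θ‖ = |r| := by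
  simp [circ, Complex.norm_exp_ofReal_mul_I, Complex.norm_real]

lemma ofReal_mul_circ (b r θ : ℝ) : (b : ℂ) * circ r θ = circ (b * r) θ := by
  unfold circ; push_cast; ring

lemma continuous_circ_uncurry : Continuous fun q : ℝ × ℝ => circ q.2 q.1 := by
  unfold circ; fun_prop

lemma ContinuousOn.comp_circ {h : ℂ → ℂ} (hh : ContinuousOn h (ball 0 1)) (θ : ℝ) :
    ContinuousOn (fun r => h (circ r θ)) (Ico 0 1) :=
  hh.comp (by unfold circ; fun_prop) fun r hr => by
    rw [mem_ball_zero_iff, norm_circ, abs_of_nonneg hr.1]; exact hr.2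

lemma setLIntegral_Ioc_le_rhoInf_rpow (hp : 0 < p) (h : ℂ → ℂ) (θ : ℝ) :
    ∫⁻ r in Ioc 0 1, ENNReal.ofReal (‖h (circ r θ)‖ ^ p) ≤ rhoInf p h ^ p := by
  rw [← ENNReal.rpow_inv_le_iff hp, ← one_div]
  exact le_iSup
    (fun θ => (∫⁻ r in Ioc (0:ℝ) 1, ENNReal.ofReal (‖h (circ r θ)‖ ^ p)) ^ (1 / p)) θ

lemma aemeasurable_setLIntegral_Ioc_comp_circ {h : ℂ → ℂ} (hh : ContinuousOn h (ball 0 1))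
    (hp : 0 ≤ p) (μ : Measure ℝ) [SFinite μ] :
    AEMeasurable (fun θ => ∫⁻ r in Ioc 0 1, ENNReal.ofReal (‖h (circ r θ)‖ ^ p)) μ := by
  -- `h` need not be continuous on the unit circle, so integrate over `Ioo 0 1` instead,
  -- which differs from `Ioc 0 1` by a null set.
  simp_rw [← setLIntegral_congr (μ := volume) (Ioo_ae_eq_Ioc (a := (0 : ℝ)) (b := 1))]
  refine AEMeasurable.lintegral_prod_right'
    (f := fun q => ENNReal.ofReal (‖h (circ q.2 q.1)‖ ^ p)) ?_
  have hprod := Measure.prod_restrict (μ := μ) (ν := volume) univ (Ioo (0 : ℝ) 1)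
  rw [Measure.restrict_univ] at hprod
  rw [hprod]
  refine ContinuousOn.aemeasurable_ofReal_norm_rpow
    (hh.comp continuous_circ_uncurry.continuousOn fun q hq => ?_)
    (MeasurableSet.univ.prod measurableSet_Ioo) hp
  rw [mem_ball_zero_iff, norm_circ, abs_of_pos hq.2.1]
  exact hq.2.2

lemma memRMp0_of_norm_le (hp : 0 < p) {f : ℂ → ℂ}
    (hf : DifferentiableOn ℂ f (ball 0 1)) {C : ℝ}
    (hC : ∀ z ∈ closedBall (0 : ℂ) 1, ‖f z‖ ≤ C) : memRMp0 p f := by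
  refine ⟨hf, ?_⟩
  have hbound : ∀ ρ ∈ Icc (0 : ℝ) 1, ⨆ θ : ℝ,
      (∫⁻ r in Ioc ρ 1, ENNReal.ofReal (‖f (circ r θ)‖ ^ p)) ^ (1 / p) ≤
        (ENNReal.ofReal (C ^ p) * ENNReal.ofReal (1 - ρ)) ^ (1 / p) := by
    intro ρ hρ
    refine iSup_le fun θ => ENNReal.rpow_le_rpow ?_ (by positivity)
    rw [← Real.volume_Ioc, ← setLIntegral_const]
    refine lintegral_mono_ae (ae_restrict_of_forall_mem measurableSet_Ioc fun r hr => ?_)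
    gcongr
    refine hC _ ?_
    rw [mem_closedBall_zero_iff, norm_circ, abs_of_pos (hρ.1.trans_lt hr.1)]
    exact hr.2
  have hlim : Tendsto (fun ρ : ℝ => (ENNReal.ofReal (C ^ p) * ENNReal.ofReal (1 - ρ)) ^ (1 / p))
      (𝓝[<] 1) (𝓝 0) := by
    have hcont : Continuous fun ρ : ℝ =>
        (ENNReal.ofReal (C ^ p) * ENNReal.ofReal (1 - ρ)) ^ (1 / p) :=
      ENNReal.continuous_rpow_const.comp
        ((ENNReal.continuous_const_mul ENNReal.ofReal_ne_top).comp
          (ENNReal.continuous_ofReal.comp (by fun_prop)))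
    have := (hcont.tendsto 1).mono_left (nhdsWithin_le_nhds (s := Iio 1))
    rwa [sub_self, ENNReal.ofReal_zero, mul_zero, ENNReal.zero_rpow_of_pos (by positivity)] at this
  refine tendsto_of_tendsto_of_tendsto_of_le_of_le' tendsto_const_nhds hlim
    (Eventually.of_forall fun _ => zero_le) ?_
  filter_upwards [Ioo_mem_nhdsLT zero_lt_one] with ρ hρ
  exact hbound ρ (Ioo_subset_Icc_self hρ)

lemma memRMp0_comp_mul (hp : 0 < p) {f : ℂ → ℂ} (hf : DifferentiableOn ℂ f (ball 0 1))
    {a : ℂ} (ha : ‖a‖ < 1) : memRMp0 p (fun z => f (a * z)) := by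
  have hmaps : ∀ z ∈ closedBall (0 : ℂ) 1, a * z ∈ closedBall (0 : ℂ) ‖a‖ := fun z hz => by
    rw [mem_closedBall_zero_iff, norm_mul] at *
    exact mul_le_of_le_one_right (norm_nonneg a) hz
  obtain ⟨C, hC⟩ := (isCompact_closedBall (0 : ℂ) ‖a‖).exists_bound_of_continuousOn
    (hf.continuousOn.mono (closedBall_subset_ball ha))
  refine memRMp0_of_norm_le hp ?_ fun z hz => hC _ (hmaps z hz)
  exact hf.comp (by fun_prop) fun z hz =>
    closedBall_subset_ball ha (hmaps z (ball_subset_closedBall hz))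

lemma rhoInf_comp_mul_le (hp : 0 ≤ p) (f : ℂ → ℂ) {a : ℝ} (ha0 : 0 < a) (ha1 : a ≤ 1) :
    rhoInf p (fun z => f (a * z)) ≤ ENNReal.ofReal a⁻¹ ^ (1 / p) * rhoInf p f := by
  refine iSup_le fun θ => ?_
  simp_rw [ofReal_mul_circ]
  rw [setLIntegral_Ioc_comp_mul_left ha0 (fun s => ENNReal.ofReal (‖f (circ s θ)‖ ^ p)),
    mul_zero, mul_one, ENNReal.mul_rpow_of_nonneg _ _ (by positivity)]
  gcongr
  refine (ENNReal.rpow_le_rpow (lintegral_mono_set (Ioc_subset_Ioc_right ha1))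
    (by positivity)).trans ?_
  exact le_iSup
    (fun θ => (∫⁻ r in Ioc (0:ℝ) 1, ENNReal.ofReal (‖f (circ r θ)‖ ^ p)) ^ (1 / p)) θ

theorem tendsto_rhoPP_comp_mul_sub (hp : 0 < p) {f : ℂ → ℂ}
    (hf : ContinuousOn f (ball 0 1)) (hfin : rhoInf p f ≠ ⊤) :
    Tendsto (fun a : ℝ => rhoPP p (fun z => f (a * z) - f z)) (𝓝[<] 1) (𝓝 0) := by
  have ha : ∀ᶠ a in 𝓝[<] (1 : ℝ), a ∈ Ioo (1 / 2) 1 := Ioo_mem_nhdsLT (by norm_num)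
  have hRp : rhoInf p f ^ p ≠ ⊤ := ENNReal.rpow_ne_top_of_nonneg hp.le hfin
  have hdouble : Tendsto (fun a : ℝ => ∫⁻ θ in Ioc 0 (2 * Real.pi), ∫⁻ r in Ioc 0 1,
      ENNReal.ofReal (‖f (a * circ r θ) - f (circ r θ)‖ ^ p)) (𝓝[<] 1) (𝓝 0) := by
    rw [show (0 : ℝ≥0∞) = ∫⁻ _ in Ioc 0 (2 * Real.pi), 0 from lintegral_zero.symm]
    refine tendsto_lintegral_filter_of_dominated_convergence'
      (fun _ => 3 * 2 ^ p * rhoInf p f ^ p) ?_ ?_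
      (by simp [Real.volume_Ioc, ENNReal.mul_eq_top, hRp]) ?_
    · filter_upwards [ha] with a ha
      refine aemeasurable_setLIntegral_Ioc_comp_circ (h := fun z => f (a * z) - f z) ?_ hp.le _
      refine (hf.comp (by fun_prop) fun z hz => ?_).sub hf
      rw [mem_ball_zero_iff, norm_mul, Complex.norm_real,
        Real.norm_of_nonneg (by linarith [ha.1])]
      exact (mul_le_of_le_one_left (norm_nonneg z) ha.2.le).trans_lt (mem_ball_zero_iff.1 hz)
    · filter_upwards [ha] with a ha
      refine ae_of_all _ fun θ => ?_
      simp only [ofReal_mul_circ]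
      calc _ ≤ 3 * 2 ^ p * ∫⁻ r in Ioc (a * 0) 1, ENNReal.ofReal (‖f (circ r θ)‖ ^ p) :=
            setLIntegral_Ioc_comp_mul_sub_le (hf.comp_circ θ) hp.le ha.1.le ha.2 le_rfl
        _ ≤ 3 * 2 ^ p * rhoInf p f ^ p := by
            rw [mul_zero]; gcongr; exact setLIntegral_Ioc_le_rhoInf_rpow hp f θ
    · refine ae_of_all _ fun θ => ?_
      simp only [ofReal_mul_circ]
      have hray := tendsto_setLIntegral_Ioc_comp_mul_sub (hf.comp_circ θ)
        (ne_top_of_le_ne_top hRp (setLIntegral_Ioc_le_rhoInf_rpow hp f θ)) hp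
      exact hray
  have := (ENNReal.Tendsto.const_mul (a := ENNReal.ofReal (1 / (2 * Real.pi))) hdouble
    (Or.inr ENNReal.ofReal_ne_top)).ennrpow_const (1 / p)
  rw [mul_zero, ENNReal.zero_rpow_of_pos (by positivity)] at this
  exact this

lemma limsup_rhoInf_comp_mul_le {ι : Type*} {l : Filter ι} [l.NeBot] (hp : 0 ≤ p) (f : ℂ → ℂ)
    {a : ι → ℝ} (ha : Tendsto a l (𝓝 1)) (ha0 : ∀ i, 0 < a i) (ha1 : ∀ i, a i ≤ 1) :
    limsup (fun i => rhoInf p (fun z => f (a i * z))) l ≤ rhoInf p f := by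
  have hfactor : Tendsto (fun i => ENNReal.ofReal (a i)⁻¹ ^ (1 / p)) l (𝓝 1) := by
    have hinv : Tendsto (fun i => (a i)⁻¹) l (𝓝 1) := by simpa using ha.inv₀ one_ne_zero
    simpa using ((ENNReal.continuous_ofReal.tendsto 1).comp hinv).ennrpow_const (1 / p)
  calc limsup (fun i => rhoInf p (fun z => f (a i * z))) l
      ≤ limsup (fun i => ENNReal.ofReal (a i)⁻¹ ^ (1 / p) * rhoInf p f) l :=
        limsup_le_limsup (Eventually.of_forall fun i => rhoInf_comp_mul_le hp f (ha0 i) (ha1 i))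
    _ = rhoInf p f := by
        simpa using (ENNReal.Tendsto.mul_const hfactor (Or.inl one_ne_zero)).limsup_eq

end Polar

/-- Let `1 < p < ∞`. For every analytic `f` on the disc with
`ρ_{p,∞}(f) < ∞` there is a sequence `{f_n} ⊂ RM(p,0)` with `ρ_{p,p}(f_n - f) → 0` and
`limsup_n ρ_{p,∞}(f_n) ≤ ρ_{p,∞}(f)`. -/
theorem stmt7 (p : ℝ) (hp : 1 < p) (f : ℂ → ℂ)
    (hf : DifferentiableOn ℂ f (ball (0:ℂ) 1)) (hfin : rhoInf p f ≠ ⊤) :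
    ∃ F : ℕ → ℂ → ℂ,
      (∀ n, memRMp0 p (F n)) ∧
      Tendsto (fun n => rhoPP p (fun z => F n z - f z)) atTop (nhds 0) ∧
      Filter.limsup (fun n => rhoInf p (F n)) atTop ≤ rhoInf p f := by
  have hp0 : 0 < p := zero_lt_one.trans hp
  obtain ⟨a, -, ha, hlim⟩ := exists_seq_strictMono_tendsto' (zero_lt_one (α := ℝ))
  have hlim' : Tendsto a atTop (𝓝[<] 1) :=
    tendsto_nhdsWithin_iff.2 ⟨hlim, Eventually.of_forall fun n => (ha n).2⟩
  refine ⟨fun n z => f (a n * z), fun n => memRMp0_comp_mul hp0 hf ?_,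
    (tendsto_rhoPP_comp_mul_sub hp0 hf.continuousOn hfin).comp hlim',
    limsup_rhoInf_comp_mul_le hp0.le f hlim (fun n => (ha n).1) fun n => (ha n).2.le⟩
  rw [Complex.norm_real, Real.norm_of_nonneg (ha n).1.le]
  exact (ha n).2
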